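/- For elements u, w of a Coxeter group W, if N(u) ⊆ N(w) then ℓ(w) = ℓ(u) + ℓ(u⁻¹w), i.e., u is a prefix of w in weak order. -/

import Mathlib

open scoped Classical

/-- A geometric representation (with based root system) of a Coxeter system `cs`
on a real vector space `V`, preserving a symmetric bilinear form `form`, with
simple roots `root i` satisfying the standard inner products
`B(α_i, α_j) = -cos (π / m i j)` (with value `≤ -1` when `m i j = ∞`, encoded `0`). -/
structure GeomRep {B : Type*} {W : Type*} [Group W] (M : CoxeterMatrix B)
    (cs : CoxeterSystem M W) (V : Type*) [AddCommGroup V] [Module ℝ V] where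
  form : LinearMap.BilinForm ℝ V
  form_symm : ∀ u v : V, form u v = form v u
  ρ : W →* (V ≃ₗ[ℝ] V)
  ρ_faithful : Function.Injective ρ
  root : B → V
  root_indep : LinearIndependent ℝ root
  form_preserved : ∀ (w : W) (u v : V), form (ρ w u) (ρ w v) = form u v
  form_root_finite : ∀ i j : B, M i j ≠ 0 →
    form (root i) (root j) = - Real.cos (Real.pi / (M i j : ℝ))
  form_root_infinite : ∀ i j : B, M i j = 0 → form (root i) (root j) ≤ -1
  simple_act : ∀ (i : B) (v : V),
    ρ (cs.simple i) v = v - (2 * form (root i) v) • root i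

namespace GeomRep

variable {B : Type*} {W : Type*} [Group W] {M : CoxeterMatrix B}
  {cs : CoxeterSystem M W} {V : Type*} [AddCommGroup V] [Module ℝ V]
  (G : GeomRep M cs V)

/-- The root system `Φ = W · Δ`. -/
def Roots : Set V := {v | ∃ (w : W) (i : B), v = G.ρ w (G.root i)}

/-- `v` is a nonnegative linear combination of simple roots. -/
def IsNonnegComb (v : V) : Prop :=
  ∃ c : B →₀ ℝ, (∀ i, 0 ≤ c i) ∧ v = c.sum fun i a => a • G.root i

/-- The set of positive roots `Φ⁺`. -/
def PosRoots : Set V := {v ∈ G.Roots | G.IsNonnegComb v}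

/-- The set of negative roots `Φ⁻ = -Φ⁺`. -/
def NegRoots : Set V := {v ∈ G.Roots | G.IsNonnegComb (-v)}

/-- The reflection in a root `α`, as a linear endomorphism of `V`. -/
def refl (α : V) : Module.End ℝ V :=
  LinearMap.id - (2 : ℝ) • LinearMap.smulRight (G.form α) α

/-- The (left) inversion set `N(w) = Φ⁺ ∩ w(Φ⁻)`. -/
def invSet (w : W) : Set V := {β ∈ G.PosRoots | G.ρ w⁻¹ β ∈ G.NegRoots}

/-- `β` dominates `α` : every `w` sending `β` negative sends `α` negative. -/
def Dominates (β α : V) : Prop := ∀ w : W, G.ρ w β ∈ G.NegRoots → G.ρ w α ∈ G.NegRoots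

/-- A small root: a positive root dominating no positive root other than itself. -/
def IsSmall (β : V) : Prop :=
  β ∈ G.PosRoots ∧ ∀ α ∈ G.PosRoots, G.Dominates β α → α = β

/-- The conical (nonnegative) hull of a set. -/
def cone (X : Set V) : Set V :=
  {v | ∃ c : V →₀ ℝ, (∀ x, 0 ≤ c x) ∧ ↑c.support ⊆ X ∧ v = c.sum fun x a => a • x}

/-- Low element: its inversion set is the biconvex closure of its small inversions. -/
def IsLow (Sm : Set V) (w : W) : Prop :=
  G.invSet w = cone (G.invSet w ∩ Sm) ∩ G.PosRoots

/-- The closed fundamental chamber. -/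
def chamber : Set V := {v | ∀ i : B, 0 ≤ G.form v (G.root i)}

/-- The Tits cone `T = ⋃_{w ∈ W} w(C̄)`. -/
def titsCone : Set V := ⋃ w : W, ⇑(G.ρ w) '' G.chamber

end GeomRep

/-! The key input is the positivity theorem for the geometric representation: `w α_i` is a
positive root if `ℓ(w s_i) > ℓ(w)` and a negative root otherwise. It is proved by induction on
`ℓ(w)`: for a right descent `s_j` of `w`, write `w = u x` with `x` an alternating product of
`s_i, s_j` and `u` shorter with neither as right descent; in rank two `x α_i` is a nonnegative
combination of `α_i, α_j`, its coefficients being Chebyshev values `U_k(-B(α_i, α_j))`.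

Consequently `α_i ∈ N(u)` exactly when `s_i` is a left descent of `u`, and `s_i` permutes
`Φ⁺ \ {α_i}`. So if `s_i` is a left descent of `u`, `N(u) ⊆ N(w)` makes it one of `w` too and
passes to `N(s_i u) ⊆ N(s_i w)`; induction on `ℓ(u)` concludes. -/

open Polynomial Chebyshev CoxeterSystem

namespace Polynomial.Chebyshev

theorem U_eval_nonneg_of_one_le {x : ℝ} (hx : 1 ≤ x) {n : ℤ} (hn : -1 ≤ n) :
    0 ≤ (U ℝ n).eval x := by
  have key : ∀ k : ℕ, 0 ≤ (U ℝ (k - 1)).eval x ∧ (U ℝ (k - 1)).eval x ≤ (U ℝ k).eval x := by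
    intro k
    induction k with
    | zero => simp
    | succ k ih =>
      obtain ⟨h0, h1⟩ := ih
      push_cast
      rw [add_sub_cancel_right, U_add_one]
      simp only [eval_sub, eval_mul, eval_ofNat, eval_X]
      constructor <;> nlinarith
  obtain ⟨k, rfl⟩ : ∃ k : ℕ, n = k - 1 := ⟨(n + 1).toNat, by omega⟩
  exact (key k).1

theorem U_eval_cos_pi_div_nonneg {m : ℕ} (hm : 2 ≤ m) {n : ℤ} (hn : -1 ≤ n) (hnm : n + 1 ≤ m) :
    0 ≤ (U ℝ n).eval (Real.cos (Real.pi / m)) := by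
  have hm : (2 : ℝ) ≤ m := by exact_mod_cast hm
  have hsin : 0 < Real.sin (Real.pi / m) :=
    Real.sin_pos_of_pos_of_lt_pi (by positivity) (div_lt_self Real.pi_pos (by linarith))
  refine nonneg_of_mul_nonneg_left ?_ hsin
  rw [U_real_cos]
  apply Real.sin_nonneg_of_nonneg_of_le_pi
  · have : (0 : ℝ) ≤ n + 1 := by exact_mod_cast (by omega : (0 : ℤ) ≤ n + 1)
    positivity
  · calc ((n : ℝ) + 1) * (Real.pi / m) ≤ m * (Real.pi / m) := by
          gcongr; exact_mod_cast hnm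
      _ = Real.pi := by field_simp

end Polynomial.Chebyshev

namespace CoxeterSystem

variable {B : Type*} {W : Type*} [Group W] {M : CoxeterMatrix B} (cs : CoxeterSystem M W)

theorem isReduced_of_length_mul_wordProd {u : W} {ω : List B}
    (h : cs.length (u * cs.wordProd ω) = cs.length u + ω.length) : cs.IsReduced ω :=
  le_antisymm (cs.length_wordProd_le ω) (by linarith [cs.length_mul_le u (cs.wordProd ω)])

theorem le_of_isReduced_alternatingWord {i j : B} {n : ℕ} (hM : M i j ≠ 0)
    (h : cs.IsReduced (alternatingWord i j n)) : n ≤ M i j :=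
  not_lt.mp fun hn => cs.not_isReduced_alternatingWord i j hM hn h

theorem exists_eq_mul_wordProd_alternatingWord {w : W} {i : B} (j : B)
    (hi : ¬cs.IsRightDescent w i) :
    ∃ (u : W) (n : ℕ), w = u * cs.wordProd (alternatingWord i j n) ∧
      cs.length w = cs.length u + n ∧ ¬cs.IsRightDescent u i ∧ ¬cs.IsRightDescent u j := by
  induction hw : cs.length w using Nat.strong_induction_on generalizing w i j with
  | _ k ih =>
  subst hw
  by_cases hj : cs.IsRightDescent w j
  · have hj' : ¬cs.IsRightDescent (w * cs.simple j) j := by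
      rwa [← isRightDescent_iff_not_isRightDescent_mul]
    obtain ⟨u, n, hwu, hlen, hu⟩ := ih _ hj (i := j) i hj' rfl
    refine ⟨u, n + 1, ?_, ?_, hu.symm⟩
    · rw [alternatingWord_succ, wordProd_concat, ← mul_assoc, ← hwu, mul_assoc,
        simple_mul_simple_self, mul_one]
    · have := cs.isRightDescent_iff.mp hj
      omega
  · exact ⟨w, 0, by simp [alternatingWord], by simp, hi, hj⟩

end CoxeterSystem

namespace GeomRep

variable {B : Type*} {W : Type*} [Group W] {M : CoxeterMatrix B}
  {cs : CoxeterSystem M W} {V : Type*} [AddCommGroup V] [Module ℝ V]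
  (G : GeomRep M cs V)

@[simp] lemma rho_mul_apply (a b : W) (v : V) : G.ρ (a * b) v = G.ρ a (G.ρ b v) := by
  rw [map_mul]; rfl

lemma form_root_self (i : B) : G.form (G.root i) (G.root i) = 1 := by
  simpa [M.diagonal i] using G.form_root_finite i i (by simp)

lemma rho_simple_root (i : B) : G.ρ (cs.simple i) (G.root i) = -G.root i := by
  rw [G.simple_act, G.form_root_self]
  module

lemma form_self_of_mem_roots {v : V} (hv : v ∈ G.Roots) : G.form v v = 1 := by
  obtain ⟨w, i, rfl⟩ := hv
  rw [G.form_preserved, G.form_root_self]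

lemma rho_mem_roots (w : W) {v : V} (hv : v ∈ G.Roots) : G.ρ w v ∈ G.Roots := by
  obtain ⟨x, i, rfl⟩ := hv
  exact ⟨w * x, i, (G.rho_mul_apply w x _).symm⟩

lemma neg_mem_roots {v : V} (hv : v ∈ G.Roots) : -v ∈ G.Roots := by
  obtain ⟨x, i, rfl⟩ := hv
  exact ⟨x * cs.simple i, i, by rw [rho_mul_apply, rho_simple_root, map_neg]⟩

lemma isNonnegComb_iff {v : V} : G.IsNonnegComb v ↔
    ∃ c : B →₀ ℝ, (∀ i, 0 ≤ c i) ∧ v = Finsupp.linearCombination ℝ G.root c :=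
  Iff.rfl

lemma root_mem_posRoots (i : B) : G.root i ∈ G.PosRoots :=
  ⟨⟨1, i, by simp⟩, Finsupp.single i 1,
    fun j => by rw [Finsupp.single_apply]; split_ifs <;> norm_num, by simp⟩

variable {G}

lemma IsNonnegComb.add {v v' : V} (hv : G.IsNonnegComb v) (hv' : G.IsNonnegComb v') :
    G.IsNonnegComb (v + v') := by
  rw [isNonnegComb_iff] at hv hv' ⊢
  obtain ⟨c, hc, rfl⟩ := hv
  obtain ⟨d, hd, rfl⟩ := hv'
  exact ⟨c + d, fun i => add_nonneg (hc i) (hd i), (map_add _ c d).symm⟩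

lemma IsNonnegComb.smul {v : V} (hv : G.IsNonnegComb v) {a : ℝ} (ha : 0 ≤ a) :
    G.IsNonnegComb (a • v) := by
  rw [isNonnegComb_iff] at hv ⊢
  obtain ⟨c, hc, rfl⟩ := hv
  exact ⟨a • c, fun i => mul_nonneg ha (hc i), (map_smul _ a c).symm⟩

lemma IsNonnegComb.eq_zero_of_neg {v : V} (hv : G.IsNonnegComb v)
    (hv' : G.IsNonnegComb (-v)) : v = 0 := by
  rw [isNonnegComb_iff] at hv hv'
  obtain ⟨c, hc, rfl⟩ := hv
  obtain ⟨d, hd, hcd⟩ := hv'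
  have hsum : c + d = 0 := G.root_indep (by rw [map_add, ← hcd, add_neg_cancel, map_zero])
  have hc0 : c = 0 := by
    ext i
    have hi := DFunLike.congr_fun hsum i
    simp only [Finsupp.add_apply, Finsupp.coe_zero, Pi.zero_apply] at hi ⊢
    linarith [hc i, hd i]
  rw [hc0, map_zero]

lemma IsNonnegComb.exists_eq_smul_root {v v' : V} (hv : G.IsNonnegComb v)
    (hv' : G.IsNonnegComb v') {i : B} {t : ℝ} (h : v + v' = t • G.root i) :
    ∃ a : ℝ, 0 ≤ a ∧ v = a • G.root i := by
  rw [isNonnegComb_iff] at hv hv'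
  obtain ⟨c, hc, rfl⟩ := hv
  obtain ⟨d, hd, rfl⟩ := hv'
  have hcd : c + d = t • Finsupp.single i 1 :=
    G.root_indep (by rw [map_add, h, map_smul, Finsupp.linearCombination_single, one_smul])
  have hc_single : c = Finsupp.single i (c i) := by
    ext k
    rcases eq_or_ne k i with rfl | hk
    · simp
    · have hk' := DFunLike.congr_fun hcd k
      simp only [Finsupp.add_apply, Finsupp.smul_apply, Finsupp.single_apply, if_neg hk.symm,
        smul_zero] at hk'
      rw [Finsupp.single_apply, if_neg hk.symm]
      linarith [hc k, hd k]
  exact ⟨c i, hc i, by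
    rw [hc_single, Finsupp.linearCombination_single, Finsupp.single_eq_same]⟩

variable (G)

lemma neg_mem_negRoots_iff {v : V} : -v ∈ G.NegRoots ↔ v ∈ G.PosRoots := by
  refine ⟨fun ⟨hv, hc⟩ => ⟨by simpa using G.neg_mem_roots hv, by simpa using hc⟩,
    fun ⟨hv, hc⟩ => ⟨G.neg_mem_roots hv, by simpa using hc⟩⟩

lemma disjoint_posRoots_negRoots : Disjoint G.PosRoots G.NegRoots := by
  refine Set.disjoint_left.mpr fun v ⟨hv, hpos⟩ ⟨_, hneg⟩ => ?_
  have h1 := G.form_self_of_mem_roots hv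
  rw [hpos.eq_zero_of_neg hneg, map_zero] at h1
  exact zero_ne_one h1

lemma rho_alternatingWord_root {i j : B} {c : ℝ} (hc : G.form (G.root i) (G.root j) = -c)
    (n : ℕ) :
    G.ρ (cs.wordProd (alternatingWord i j n)) (G.root i) =
      (U ℝ (if Even n then n else n - 1)).eval c • G.root i +
        (U ℝ (if Even n then n - 1 else n)).eval c • G.root j := by
  have hji : G.form (G.root j) (G.root i) = -c := by rw [G.form_symm, hc]
  induction n with
  | zero => simp [alternatingWord]
  | succ n ih =>
    rw [alternatingWord_succ', cs.wordProd_cons, rho_mul_apply, ih]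
    rcases Nat.even_or_odd n with hn | hn
    · have hn' : ¬Even (n + 1) := by simpa [Nat.even_add_one] using hn
      simp only [hn, hn', if_true, if_false, G.simple_act, map_add, map_smul, hji,
        G.form_root_self]
      push_cast
      rw [U_add_one]
      simp only [eval_sub, eval_mul, eval_ofNat, eval_X, add_sub_cancel_right]
      module
    · have hn' : Even (n + 1) := by simpa [Nat.even_add_one] using hn
      simp only [Nat.not_even_iff_odd.mpr hn, hn', if_true, if_false, G.simple_act, map_add,
        map_smul, hc, G.form_root_self]
      push_cast
      rw [U_add_one]
      simp only [eval_sub, eval_mul, eval_ofNat, eval_X, add_sub_cancel_right]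
      module

lemma exists_nonneg_rho_alternatingWord_root {i j : B} (hij : i ≠ j) {n : ℕ}
    (hn : M i j ≠ 0 → n + 1 ≤ M i j) :
    ∃ a b : ℝ, 0 ≤ a ∧ 0 ≤ b ∧
      G.ρ (cs.wordProd (alternatingWord i j n)) (G.root i) = a • G.root i + b • G.root j := by
  set c := -G.form (G.root i) (G.root j) with hc
  have hU : ∀ k : ℤ, -1 ≤ k → k ≤ n → 0 ≤ (U ℝ k).eval c := by
    intro k hk hkn
    by_cases hM : M i j = 0
    · exact U_eval_nonneg_of_one_le (by linarith [G.form_root_infinite i j hM]) hk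
    · rw [hc, G.form_root_finite i j hM, neg_neg]
      have := M.off_diagonal i j hij
      exact U_eval_cos_pi_div_nonneg (by omega) hk (by have := hn hM; omega)
  refine ⟨_, _, ?_, ?_, G.rho_alternatingWord_root (neg_neg _).symm n⟩ <;>
    split_ifs <;> apply hU <;> omega

theorem rho_root_mem_posRoots (w : W) (i : B) (hi : ¬cs.IsRightDescent w i) :
    G.ρ w (G.root i) ∈ G.PosRoots := by
  induction hw : cs.length w using Nat.strong_induction_on generalizing w i with
  | _ k ih =>
  subst hw
  rcases eq_or_ne w 1 with rfl | hw1
  · simpa using G.root_mem_posRoots i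
  obtain ⟨j, hj⟩ := cs.exists_rightDescent_of_ne_one hw1
  have hij : i ≠ j := by rintro rfl; exact hi hj
  obtain ⟨u, n, rfl, hlen, hui, huj⟩ := cs.exists_eq_mul_wordProd_alternatingWord j hi
  have hn : M i j ≠ 0 → n + 1 ≤ M i j := by
    intro hM
    rw [M.symmetric] at hM ⊢
    refine cs.le_of_isReduced_alternatingWord hM
      (cs.isReduced_of_length_mul_wordProd (u := u) ?_)
    rw [alternatingWord_succ, wordProd_concat, ← mul_assoc, List.length_concat,
      length_alternatingWord, cs.not_isRightDescent_iff.mp hi, hlen, add_assoc]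
  have hu : cs.length u < cs.length (u * cs.wordProd (alternatingWord i j n)) := by
    rcases Nat.eq_zero_or_pos n with rfl | hn0
    · simp only [alternatingWord, wordProd_nil, mul_one] at hj
      exact absurd hj huj
    · omega
  obtain ⟨a, b, ha, hb, hab⟩ := G.exists_nonneg_rho_alternatingWord_root hij hn
  refine ⟨⟨_, i, rfl⟩, ?_⟩
  rw [rho_mul_apply, hab, map_add, map_smul, map_smul]
  exact ((ih _ hu u i hui rfl).2.smul ha).add ((ih _ hu u j huj rfl).2.smul hb)

theorem isRightDescent_iff_rho_root_mem_negRoots (w : W) (i : B) :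
    cs.IsRightDescent w i ↔ G.ρ w (G.root i) ∈ G.NegRoots := by
  refine ⟨fun h => ?_, fun h => by_contra fun h' =>
    Set.disjoint_left.mp G.disjoint_posRoots_negRoots (G.rho_root_mem_posRoots w i h') h⟩
  have hpos := G.rho_root_mem_posRoots _ i (cs.isRightDescent_iff_not_isRightDescent_mul.mp h)
  rw [← neg_mem_negRoots_iff, rho_mul_apply, rho_simple_root, map_neg, neg_neg] at hpos
  exact hpos

lemma mem_posRoots_or_mem_negRoots {v : V} (hv : v ∈ G.Roots) :
    v ∈ G.PosRoots ∨ v ∈ G.NegRoots := by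
  obtain ⟨w, i, rfl⟩ := hv
  rw [← isRightDescent_iff_rho_root_mem_negRoots]
  exact (em _).symm.imp_left (G.rho_root_mem_posRoots w i)

lemma rho_simple_mem_posRoots {i : B} {β : V} (hβ : β ∈ G.PosRoots) (hne : β ≠ G.root i) :
    G.ρ (cs.simple i) β ∈ G.PosRoots := by
  refine (G.mem_posRoots_or_mem_negRoots (G.rho_mem_roots _ hβ.1)).resolve_right fun hneg => ?_
  obtain ⟨a, ha, rfl⟩ := hβ.2.exists_eq_smul_root hneg.2 (t := 2 * G.form (G.root i) β)
    (by rw [G.simple_act]; abel)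
  have h1 := G.form_self_of_mem_roots hβ.1
  simp only [map_smul, LinearMap.smul_apply, G.form_root_self, smul_eq_mul, mul_one] at h1
  have ha1 : a = 1 := by nlinarith
  exact hne (by rw [ha1, one_smul])

lemma root_mem_invSet_iff (u : W) (i : B) : G.root i ∈ G.invSet u ↔ cs.IsLeftDescent u i := by
  rw [← cs.isRightDescent_inv_iff, G.isRightDescent_iff_rho_root_mem_negRoots]
  exact and_iff_right (G.root_mem_posRoots i)

lemma invSet_simple_mul_subset {u w : W} {i : B} (hu : cs.IsLeftDescent u i)
    (h : G.invSet u ⊆ G.invSet w) :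
    G.invSet (cs.simple i * u) ⊆ G.invSet (cs.simple i * w) := by
  rintro β ⟨hβ, hβu⟩
  rw [mul_inv_rev, cs.inv_simple, rho_mul_apply] at hβu
  have hne : β ≠ G.root i := by
    rintro rfl
    rw [rho_simple_root, map_neg, neg_mem_negRoots_iff] at hβu
    exact Set.disjoint_left.mp G.disjoint_posRoots_negRoots hβu
      ((G.root_mem_invSet_iff u i).mpr hu).2
  refine ⟨hβ, ?_⟩
  rw [mul_inv_rev, cs.inv_simple, rho_mul_apply]
  exact (h ⟨G.rho_simple_mem_posRoots hβ hne, hβu⟩).2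

end GeomRep

/-- If `N(u) ⊆ N(w)` then `ℓ(w) = ℓ(u) + ℓ(u⁻¹w)`. -/
theorem invSet_subset_imp_prefix {B : Type*} {W : Type*} [Group W] {M : CoxeterMatrix B}
    (cs : CoxeterSystem M W) {V : Type*} [AddCommGroup V] [Module ℝ V]
    (G : GeomRep M cs V) (u w : W) (h : G.invSet u ⊆ G.invSet w) :
    cs.length w = cs.length u + cs.length (u⁻¹ * w) := by
  induction hu : cs.length u using Nat.strong_induction_on generalizing u w with
  | _ n ih =>
  subst hu
  rcases eq_or_ne u 1 with rfl | hu1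
  · simp
  obtain ⟨i, hi⟩ := cs.exists_leftDescent_of_ne_one hu1
  have hwi : cs.IsLeftDescent w i :=
    (G.root_mem_invSet_iff w i).mp (h ((G.root_mem_invSet_iff u i).mpr hi))
  have hrec := ih _ hi (cs.simple i * u) (cs.simple i * w) (G.invSet_simple_mul_subset hi h) rfl
  rw [mul_inv_rev, cs.inv_simple, mul_assoc, simple_mul_simple_cancel_left] at hrec
  have hu_len := cs.isLeftDescent_iff.mp hi
  have hw_len := cs.isLeftDescent_iff.mp hwi
  omega
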